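/- arXiv:2309.13346 — 3 statements merged into one kernel-verified Lean document; each statement's English description precedes it below -/
import Mathlib

section
/- Let φ and ψ be anisotropic diagonal quasilinear p-forms over F such that φ and ψ are weakly Vishik equivalent. Then G_F(φ) = G_F(ψ), i.e., the two forms have exactly the same similarity factors. -/
/-!
Diagonal quasilinear `p`-forms over a field `F` of characteristic `p`,
following Hoffmann and Zemková. A form of dimension `n` is recorded by its
coefficient tuple `a : ι → F` (for a finite index type `ι`), the form being
`x ↦ ∑ i, a i * (x i)^p`.
-/

universe u

namespace QLF

open scoped BigOperators

/-- Evaluation of the diagonal quasilinear `p`-form with coefficients `a` at `x`. -/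
def eval (p : ℕ) {F : Type*} [CommRing F] {ι : Type*} [Fintype ι]
    (a : ι → F) (x : ι → F) : F :=
  ∑ i, a i * x i ^ p

/-- A form is isotropic if it has a nontrivial zero. -/
def Isotropic (p : ℕ) {F : Type*} [CommRing F] {ι : Type*} [Fintype ι] (a : ι → F) : Prop :=
  ∃ x : ι → F, x ≠ 0 ∧ eval p a x = 0

/-- A form is anisotropic if it has no nontrivial zero. -/
def Anisotropic (p : ℕ) {F : Type*} [CommRing F] {ι : Type*} [Fintype ι] (a : ι → F) : Prop :=
  ¬ Isotropic p a

/-- In characteristic `p`, the zero set of a diagonal quasilinear `p`-form is a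
linear subspace. -/
def zeroSubmodule (p : ℕ) [Fact p.Prime] {F : Type*} [Field F] [CharP F p]
    {ι : Type*} [Fintype ι] (a : ι → F) : Submodule F (ι → F) where
  carrier := {x | eval p a x = 0}
  zero_mem' := by
    have hp : p ≠ 0 := (Fact.out : p.Prime).ne_zero
    simp [eval, zero_pow hp]
  add_mem' := by
    intro x y hx hy
    haveI : ExpChar F p := .prime Fact.out
    have hxy : eval p a (x + y) = eval p a x + eval p a y := by
      simp only [eval, Pi.add_apply]
      rw [← Finset.sum_add_distrib]
      exact Finset.sum_congr rfl fun i _ => by rw [add_pow_char, mul_add]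
    simp only [Set.mem_setOf_eq] at *
    rw [hxy, hx, hy, add_zero]
  smul_mem' := by
    intro c x hx
    simp only [Set.mem_setOf_eq] at *
    have hcx : eval p a (c • x) = c ^ p * eval p a x := by
      simp only [eval, Pi.smul_apply, smul_eq_mul, Finset.mul_sum]
      exact Finset.sum_congr rfl fun i _ => by rw [mul_pow]; ring
    rw [hcx, hx, mul_zero]

/-- The defect `i₀` of a form: the dimension of its zero set. -/
noncomputable def defect (p : ℕ) [Fact p.Prime] {F : Type*} [Field F] [CharP F p]
    {ι : Type*} [Fintype ι] (a : ι → F) : ℕ :=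
  Module.finrank F (zeroSubmodule p a)

/-- Isometry of forms: a linear bijection carrying one form into the other. -/
def Isometric (p : ℕ) {F : Type*} [Field F] {ι κ : Type*} [Fintype ι] [Fintype κ]
    (a : ι → F) (b : κ → F) : Prop :=
  ∃ T : (ι → F) ≃ₗ[F] (κ → F), ∀ x, eval p a x = eval p b (T x)

/-- `a` is a subform of `b`. -/
def Subform (p : ℕ) {F : Type*} [Field F] {ι κ : Type*} [Fintype ι] [Fintype κ]
    (a : ι → F) (b : κ → F) : Prop :=
  ∃ T : (ι → F) →ₗ[F] (κ → F), Function.Injective T ∧ ∀ x, eval p a x = eval p b (T x)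

/-- Similarity of forms: `a ≃ c·b` for some scalar `c ≠ 0`. -/
def Similar (p : ℕ) {F : Type*} [Field F] {ι κ : Type*} [Fintype ι] [Fintype κ]
    (a : ι → F) (b : κ → F) : Prop :=
  ∃ c : F, c ≠ 0 ∧ Isometric p a (fun i => c * b i)

/-- Vishik equivalence: same dimension, and equal defects over every field
extension `E/F`. -/
def VishikEquiv (p : ℕ) [Fact p.Prime] {F : Type u} [Field F] [CharP F p]
    {ι κ : Type*} [Fintype ι] [Fintype κ] (a : ι → F) (b : κ → F) : Prop :=
  Fintype.card ι = Fintype.card κ ∧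
    ∀ (E : Type u) [Field E] [CharP E p] (f : F →+* E),
      defect p (f ∘ a) = defect p (f ∘ b)

/-- Weak Vishik equivalence: same dimension, and equal defects over every field
extension of the shape `E = F(α)` with `αᵖ ∈ F` (this includes `E = F`). -/
def WeakVishikEquiv (p : ℕ) [Fact p.Prime] {F : Type u} [Field F] [CharP F p]
    {ι κ : Type*} [Fintype ι] [Fintype κ] (a : ι → F) (b : κ → F) : Prop :=
  Fintype.card ι = Fintype.card κ ∧
    ∀ (E : Type u) [Field E] [CharP E p] (f : F →+* E) (α : E),
      α ^ p ∈ Set.range ⇑f →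
      Subfield.closure (insert α (Set.range ⇑f)) = ⊤ →
      defect p (f ∘ a) = defect p (f ∘ b)

/-- The set `Fᵖ` of `p`-th powers. -/
def pSet (p : ℕ) (F : Type*) [Field F] : Set F := Set.range fun x : F => x ^ p

/-- The subfield `Fᵖ` of `p`-th powers (in characteristic `p` the set of `p`-th
powers is already a subfield, so the closure adds nothing). -/
def pthSubfield (p : ℕ) (F : Type*) [Field F] : Subfield F :=
  Subfield.closure (pSet p F)

/-- The subfield `Fᵖ(s)` generated by a set `s` over `Fᵖ`. -/
def adjoin (p : ℕ) {F : Type*} [Field F] (s : Set F) : Subfield F :=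
  Subfield.closure (pSet p F ∪ s)

/-- The degree `[N : k]` of a subfield `N` over a subfield `k` (for `k ≤ N`,
the `k`-span of `N` in `F` is `N` itself, so this is the `k`-dimension of `N`). -/
noncomputable def degOver {F : Type*} [Field F] (k : Subfield F) (N : Subfield F) : ℕ :=
  Module.finrank k (Submodule.span k (N : Set F))

/-- The set `D_F(φ)` of values of the form. -/
def values (p : ℕ) {F : Type*} [CommRing F] {ι : Type*} [Fintype ι] (a : ι → F) : Set F :=
  Set.range (eval p a)

/-- The norm field `N_F(φ)`: the subfield generated over `Fᵖ` by all quotients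
of nonzero values of `φ`. -/
def normField (p : ℕ) {F : Type*} [Field F] {ι : Type*} [Fintype ι] (a : ι → F) : Subfield F :=
  adjoin p {z : F | ∃ u ∈ values p a, ∃ v ∈ values p a, u ≠ 0 ∧ v ≠ 0 ∧ z = u / v}

/-- The norm degree `ndeg_F(φ) = [N_F(φ) : Fᵖ]`. -/
noncomputable def ndeg (p : ℕ) {F : Type*} [Field F] {ι : Type*} [Fintype ι] (a : ι → F) : ℕ :=
  degOver (pthSubfield p F) (normField p a)

/-- An anisotropic form is minimal if `ndeg_F(φ) = p^(dim φ - 1)`. -/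
def Minimal (p : ℕ) {F : Type*} [Field F] {ι : Type*} [Fintype ι] (a : ι → F) : Prop :=
  Anisotropic p a ∧ ndeg p a = p ^ (Fintype.card ι - 1)

/-- The quasi-Pfister form `⟪b₁,…,bₙ⟫`: its coefficients are all products
`b₁^{e₁}⋯bₙ^{eₙ}` with `0 ≤ eᵢ ≤ p-1`. -/
def pfister (p : ℕ) {F : Type*} [CommRing F] {n : ℕ} (b : Fin n → F) :
    (Fin n → Fin p) → F :=
  fun e => ∏ i, b i ^ (e i : ℕ)

/-- A form is a quasi-Pfister form if it is isometric to some `⟪b₁,…,bₙ⟫`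
with all `bᵢ ∈ F×`. -/
def IsQuasiPfister (p : ℕ) {F : Type*} [Field F] {ι : Type*} [Fintype ι] (a : ι → F) : Prop :=
  ∃ (n : ℕ) (b : Fin n → F), (∀ i, b i ≠ 0) ∧ Isometric p a (pfister p b)

/-- `a` is a quasi-Pfister neighbor of the form `π`: `c·a ⊆ π` for some `c ≠ 0`
and `p · dim a > dim π`. -/
def IsNeighborOf (p : ℕ) {F : Type*} [Field F] {ι κ : Type*} [Fintype ι] [Fintype κ]
    (a : ι → F) (π : κ → F) : Prop :=
  ∃ c : F, c ≠ 0 ∧ Subform p (fun i => c * a i) π ∧ p * Fintype.card ι > Fintype.card κ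

/-- `a` is a quasi-Pfister neighbor (of some quasi-Pfister form). -/
def IsQPNeighbor (p : ℕ) {F : Type*} [Field F] {ι : Type*} [Fintype ι] (a : ι → F) : Prop :=
  ∃ (n : ℕ) (b : Fin n → F), (∀ i, b i ≠ 0) ∧ IsNeighborOf p a (pfister p b)

/-- `a` is a quasi-Pfister neighbor of codimension one of some anisotropic
quasi-Pfister form: `dim π - dim a = 1`. -/
def IsQPNeighborCodimOne (p : ℕ) {F : Type*} [Field F] {ι : Type*} [Fintype ι]
    (a : ι → F) : Prop :=
  ∃ (n : ℕ) (b : Fin n → F), (∀ i, b i ≠ 0) ∧ Anisotropic p (pfister p b) ∧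
    IsNeighborOf p a (pfister p b) ∧ Fintype.card ι + 1 = p ^ n

/-- Tensor product of diagonal forms: coefficients `aᵢ · bⱼ`. -/
def tensor (p : ℕ) {F : Type*} [CommRing F] {ι κ : Type*}
    (a : ι → F) (b : κ → F) : ι × κ → F :=
  fun ik => a ik.1 * b ik.2

/-- The set `G_F(φ) = {x ∈ F× : xφ ≃ φ} ∪ {0}` of similarity factors. -/
def simFactors (p : ℕ) {F : Type*} [Field F] {ι : Type*} [Fintype ι] (a : ι → F) : Set F :=
  {x | x ≠ 0 ∧ Isometric p (fun i => x * a i) a} ∪ {0}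

/-- `b` is the anisotropic part of `a`: `b` is anisotropic and
`a ≃ b ⊥ (m × ⟨0⟩)` for some `m`. -/
def IsAnisotropicPart (p : ℕ) {F : Type*} [Field F] {ι κ : Type*} [Fintype ι] [Fintype κ]
    (a : ι → F) (b : κ → F) : Prop :=
  Anisotropic p b ∧ ∃ m : ℕ, Isometric p a (Sum.elim b fun _ : Fin m => (0 : F))

/-- `⟪c₁,…,cₘ⟫` is (a representative of) the norm form of `a`:
`N_F(a) = Fᵖ(c₁,…,cₘ)` and `ndeg_F(a) = pᵐ`. -/
def IsNormForm (p : ℕ) {F : Type*} [Field F] {ι : Type*} [Fintype ι] (a : ι → F)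
    {m : ℕ} (c : Fin m → F) : Prop :=
  normField p a = adjoin p (Set.range c) ∧ ndeg p a = p ^ m

end QLF

/-!
The values of an anisotropic form `φ` of dimension `n` form an `n`-dimensional `Fᵖ`-space `V`,
and `x φ ≃ φ` iff `x V ⊆ V`, i.e. iff the `Fᵖ(x)`-span `W` of `V` still has dimension `n`.
For `x ∉ Fᵖ` put `E = F(α)` with `αᵖ = x`: then `Eᵖ = Fᵖ(x)`, so `W` is the value space of
`φ_E` and `dim_{Fᵖ} W = p · (n - i₀(φ_E))`. Weak Vishik equivalence equates these defects for
`φ` and `ψ`, hence the criterion holds for both or for neither. For `x ∈ Fᵖ`, `x φ ≃ φ` always.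
-/

namespace QLF

open Module Submodule

section Forms

variable (p : ℕ) {K : Type*} [Field K] {ι : Type*} [Fintype ι]

lemma anisotropic_mul {a : ι → K} (ha : Anisotropic p a) {x : K} (hx : x ≠ 0) :
    Anisotropic p (fun i => x * a i) := by
  rintro ⟨v, hv, hev⟩
  refine ha ⟨v, hv, (mul_eq_zero.mp ?_).resolve_left hx⟩
  simpa only [eval, Finset.mul_sum, mul_assoc] using hev

lemma isometric_pow_mul (a : ι → K) {y : K} (hy : y ≠ 0) :
    Isometric p (fun i => y ^ p * a i) a :=
  ⟨LinearEquiv.smulOfNeZero K (ι → K) y hy, fun v => by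
    simp only [eval, LinearEquiv.smulOfNeZero_apply, Pi.smul_apply, smul_eq_mul, mul_pow]
    exact Finset.sum_congr rfl fun i _ => by ring⟩

end Forms

section Twist

variable (p : ℕ)

/-- `K` as a module over itself through the Frobenius, `r • y = r ^ p * y`. The values of a
form over `K` make up a `K`-submodule of it: the `Kᵖ`-span of the coefficients. -/
def Twist (_p : ℕ) (K : Type*) : Type _ := K

def toTwist {K : Type*} (y : K) : Twist p K := y

def ofTwist {K : Type*} (y : Twist p K) : K := y

lemma toTwist_injective {K : Type*} : Function.Injective (toTwist p (K := K)) := fun _ _ h => h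

section Field

variable {K : Type*} [Field K]

instance : AddCommGroup (Twist p K) := inferInstanceAs (AddCommGroup K)

lemma toTwist_add (y z : K) : toTwist p (y + z) = toTwist p y + toTwist p z := rfl

variable [Fact p.Prime] [CharP K p]

noncomputable instance : Module K (Twist p K) :=
  letI : ExpChar K p := .prime Fact.out
  Module.compHom K (frobenius K p)

lemma toTwist_smul (r y : K) : r • toTwist p y = toTwist p (r ^ p * y) := rfl

variable {ι κ : Type*}

/-- The set `D_K(a) ∪ {0}` of values of `a`, i.e. the `Kᵖ`-span of its coefficients. -/
noncomputable def valueSpace (a : ι → K) : Submodule K (Twist p K) :=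
  span K (Set.range fun i => toTwist p (a i))

lemma toTwist_mem_valueSpace (a : ι → K) (i : ι) : toTwist p (a i) ∈ valueSpace p a :=
  subset_span ⟨i, rfl⟩

noncomputable def mulTwist (x : K) : Twist p K →ₗ[K] Twist p K where
  toFun v := toTwist p (x * ofTwist p v)
  map_add' v w := mul_add x (ofTwist p v) (ofTwist p w)
  map_smul' r v := mul_left_comm x (r ^ p) (ofTwist p v)

lemma mulTwist_toTwist (x y : K) : mulTwist p x (toTwist p y) = toTwist p (x * y) := rfl

lemma map_mulTwist_valueSpace (x : K) (a : ι → K) :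
    (valueSpace p a).map (mulTwist p x) = valueSpace p (fun i => x * a i) := by
  rw [valueSpace, map_span, ← Set.range_comp]
  rfl

instance [Finite ι] (a : ι → K) : FiniteDimensional K (valueSpace p a) :=
  FiniteDimensional.span_of_finite K (Set.finite_range _)

lemma valueSpace_le_tensor_powers (x : K) (a : ι → K) :
    valueSpace p a ≤ valueSpace p (tensor p (fun k : Fin p => x ^ (k : ℕ)) a) := by
  refine span_le.mpr ?_
  rintro _ ⟨i, rfl⟩
  simpa [tensor] using toTwist_mem_valueSpace p (tensor p (fun k : Fin p => x ^ (k : ℕ)) a)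
    (⟨0, (Fact.out : p.Prime).pos⟩, i)

/-- The value space of `⟨1, x, …, x^(p-1)⟩ ⊗ a` is the `Kᵖ(x)`-span of the coefficients of `a`. -/
lemma valueSpace_tensor_powers_eq_iff (x : K) (a : ι → K) :
    valueSpace p (tensor p (fun k : Fin p => x ^ (k : ℕ)) a) = valueSpace p a ↔
      valueSpace p (fun i => x * a i) ≤ valueSpace p a := by
  have hp : p.Prime := Fact.out
  constructor
  · intro h
    rw [← h]
    refine span_le.mpr ?_
    rintro _ ⟨i, rfl⟩
    simpa [tensor, Nat.mod_eq_of_lt hp.one_lt] using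
      toTwist_mem_valueSpace p (tensor p (fun k : Fin p => x ^ (k : ℕ)) a) (⟨1, hp.one_lt⟩, i)
  · intro h
    refine le_antisymm (span_le.mpr ?_) (valueSpace_le_tensor_powers p x a)
    rintro _ ⟨⟨k, i⟩, rfl⟩
    show toTwist p (x ^ (k : ℕ) * a i) ∈ valueSpace p a
    induction (k : ℕ) with
    | zero =>
      rw [pow_zero, one_mul]
      exact toTwist_mem_valueSpace p a i
    | succ k ih =>
      rw [pow_succ', mul_assoc, ← mulTwist_toTwist]
      have hx := mem_map_of_mem (f := mulTwist p x) ih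
      rw [map_mulTwist_valueSpace] at hx
      exact h hx

variable [Fintype ι] [Fintype κ]

noncomputable def evalTwist (a : ι → K) : (ι → K) →ₗ[K] Twist p K where
  toFun v := toTwist p (eval p a v)
  map_add' v w := by
    have : ExpChar K p := .prime Fact.out
    simp only [eval, Pi.add_apply, add_pow_char, mul_add, Finset.sum_add_distrib, toTwist_add]
  map_smul' r v := by
    simp only [eval, Pi.smul_apply, smul_eq_mul, mul_pow, RingHom.id_apply, toTwist_smul,
      Finset.mul_sum]
    congr 1
    exact Finset.sum_congr rfl fun i _ => by ring

lemma evalTwist_apply (a v : ι → K) : evalTwist p a v = toTwist p (eval p a v) := rfl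

lemma evalTwist_basisFun (a : ι → K) (i : ι) :
    evalTwist p a (Pi.basisFun K ι i) = toTwist p (a i) := by
  have hp : p ≠ 0 := (Fact.out : p.Prime).ne_zero
  classical
  simp [evalTwist_apply, eval, Pi.single_apply, zero_pow hp]

lemma ker_evalTwist (a : ι → K) : LinearMap.ker (evalTwist p a) = zeroSubmodule p a := rfl

lemma range_evalTwist (a : ι → K) : LinearMap.range (evalTwist p a) = valueSpace p a := by
  rw [valueSpace, LinearMap.range_eq_map, ← (Pi.basisFun K ι).span_eq, map_span,
    ← Set.range_comp]
  exact congrArg _ (congrArg _ (funext (evalTwist_basisFun p a)))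

lemma defect_add_finrank_valueSpace (a : ι → K) :
    defect p a + finrank K (valueSpace p a) = Fintype.card ι := by
  rw [defect, ← ker_evalTwist, ← range_evalTwist, add_comm,
    LinearMap.finrank_range_add_finrank_ker, finrank_fintype_fun_eq_card]

lemma zeroSubmodule_eq_bot {a : ι → K} (ha : Anisotropic p a) : zeroSubmodule p a = ⊥ :=
  (Submodule.eq_bot_iff _).mpr fun v hv => by_contra fun hne => ha ⟨v, hne, hv⟩

lemma finrank_valueSpace_of_anisotropic {a : ι → K} (ha : Anisotropic p a) :
    finrank K (valueSpace p a) = Fintype.card ι := by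
  have h := defect_add_finrank_valueSpace p a
  rwa [defect, zeroSubmodule_eq_bot p ha, finrank_bot, zero_add] at h

lemma evalTwist_comp {a : ι → K} {b : κ → K} {T : (ι → K) →ₗ[K] (κ → K)}
    (hT : ∀ v, eval p a v = eval p b (T v)) : (evalTwist p b).comp T = evalTwist p a :=
  LinearMap.ext fun v => congrArg (toTwist p) (hT v).symm

lemma valueSpace_le_of_isometric {a : ι → K} {b : κ → K} (h : Isometric p a b) :
    valueSpace p a ≤ valueSpace p b := by
  obtain ⟨T, hT⟩ := h
  rw [← range_evalTwist, ← range_evalTwist, ← evalTwist_comp p hT]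
  exact LinearMap.range_comp_le_range _ _

lemma isometric_of_valueSpace_le {a : ι → K} {b : κ → K} (ha : Anisotropic p a)
    (hcard : Fintype.card ι = Fintype.card κ) (h : valueSpace p a ≤ valueSpace p b) :
    Isometric p a b := by
  have hlift : ∀ i, ∃ w, evalTwist p b w = toTwist p (a i) := fun i => by
    rw [← LinearMap.mem_range, range_evalTwist]
    exact h (toTwist_mem_valueSpace p a i)
  choose w hw using hlift
  let T := (Pi.basisFun K ι).constr K w
  have hT : (evalTwist p b).comp T = evalTwist p a := (Pi.basisFun K ι).ext fun i => by
    rw [LinearMap.comp_apply, Basis.constr_basis, hw, evalTwist_basisFun]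
  have hinj : Function.Injective T := by
    rw [← LinearMap.ker_eq_bot, eq_bot_iff, ← zeroSubmodule_eq_bot p ha, ← ker_evalTwist, ← hT]
    exact LinearMap.ker_le_ker_comp _ _
  have hsurj : Function.Surjective T :=
    (LinearMap.injective_iff_surjective_of_finrank_eq_finrank (by simp [hcard])).mp hinj
  exact ⟨.ofBijective T ⟨hinj, hsurj⟩, fun v => toTwist_injective p (LinearMap.congr_fun hT v).symm⟩

lemma isometric_mul_self_iff {a : ι → K} (ha : Anisotropic p a) {x : K} (hx : x ≠ 0) :
    Isometric p (fun i => x * a i) a ↔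
      finrank K (valueSpace p (tensor p (fun k : Fin p => x ^ (k : ℕ)) a)) = Fintype.card ι := by
  rw [← finrank_valueSpace_of_anisotropic p ha]
  constructor
  · intro h
    rw [(valueSpace_tensor_powers_eq_iff p x a).mpr (valueSpace_le_of_isometric p h)]
  · intro h
    have hW := (eq_of_le_of_finrank_eq (valueSpace_le_tensor_powers p x a) h.symm).symm
    exact isometric_of_valueSpace_le p (anisotropic_mul p ha hx) rfl
      ((valueSpace_tensor_powers_eq_iff p x a).mp hW)

end Field

end Twist

section Extension

variable (p : ℕ) [Fact p.Prime]

/-- Over `E = F(α)` with `αᵖ = x`, the `Eᵖ`-span of the coefficients of `a` is their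
`Fᵖ(x)`-span, and its `Fᵖ`-dimension is `[E : F] = p` times its `Eᵖ`-dimension. -/
lemma finrank_valueSpace_tensor_powers {F E : Type*} [Field F] [Field E] [CharP F p] [CharP E p]
    [Algebra F E] {ι : Type*} [Fintype ι] {x : F} {α : E} (hα : α ^ p = algebraMap F E x)
    (b : Basis (Fin p) F E) (hb : ∀ k, b k = α ^ (k : ℕ)) (a : ι → F) :
    finrank F (valueSpace p (tensor p (fun k : Fin p => x ^ (k : ℕ)) a)) =
      p * finrank E (valueSpace p (algebraMap F E ∘ a)) := by
  let _ : Module F (Twist p E) := Module.compHom _ (algebraMap F E)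
  have _ : IsScalarTower F E (Twist p E) := ⟨fun f e y => by
    show (f • e) • y = algebraMap F E f • e • y
    rw [Algebra.smul_def, mul_smul]⟩
  let emb : Twist p F →ₗ[F] Twist p E :=
    { toFun := fun z => toTwist p (algebraMap F E (ofTwist p z))
      map_add' := fun y z =>
        congrArg (toTwist p) (map_add (algebraMap F E) (ofTwist p y) (ofTwist p z))
      map_smul' := fun f z => by
        show toTwist p (algebraMap F E (f ^ p * ofTwist p z)) =
          toTwist p (algebraMap F E f ^ p * algebraMap F E (ofTwist p z))
        rw [map_mul, map_pow] }
  have hinj : Function.Injective emb := fun y z h => (algebraMap F E).injective h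
  have hspan : span F (Set.range fun k : Fin p => α ^ (k : ℕ)) = ⊤ := by
    rw [← b.span_eq]
    exact congrArg _ (congrArg _ (funext fun k => (hb k).symm))
  have hmap : (valueSpace p (tensor p (fun k : Fin p => x ^ (k : ℕ)) a)).map emb =
      (valueSpace p (algebraMap F E ∘ a)).restrictScalars F := by
    rw [valueSpace, valueSpace, map_span, ← span_smul_of_span_eq_top hspan, Set.range_smul_range,
      ← Set.range_comp]
    congr 2
    funext ⟨k, i⟩
    show toTwist p (algebraMap F E (x ^ (k : ℕ) * a i)) =
      α ^ (k : ℕ) • toTwist p (algebraMap F E (a i))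
    rw [toTwist_smul, ← pow_mul, mul_comm (k : ℕ) p, pow_mul, hα, map_mul, map_pow]
  calc finrank F (valueSpace p (tensor p (fun k : Fin p => x ^ (k : ℕ)) a))
      = finrank F ((valueSpace p (algebraMap F E ∘ a)).restrictScalars F) := by
        rw [← hmap]
        exact (equivMapOfInjective emb hinj _).finrank_eq
    _ = finrank F (valueSpace p (algebraMap F E ∘ a)) := rfl
    _ = finrank F E * finrank E (valueSpace p (algebraMap F E ∘ a)) :=
        (finrank_mul_finrank F E _).symm
    _ = p * finrank E (valueSpace p (algebraMap F E ∘ a)) := by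
        rw [finrank_eq_card_basis b, Fintype.card_fin]

lemma closure_insert_eq_top_of_basis {F E : Type*} [Field F] [Field E] [Algebra F E] {α : E}
    {n : ℕ} (b : Basis (Fin n) F E) (hb : ∀ k, b k = α ^ (k : ℕ)) :
    Subfield.closure (insert α (Set.range (algebraMap F E))) = ⊤ := by
  refine eq_top_iff.mpr fun e _ => ?_
  rw [← b.sum_repr e]
  refine sum_mem fun k _ => ?_
  rw [Algebra.smul_def, hb]
  exact mul_mem (Subfield.subset_closure (Set.mem_insert_of_mem _ ⟨_, rfl⟩))
    (pow_mem (Subfield.subset_closure (Set.mem_insert _ _)) _)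

open Polynomial in
lemma exists_basis_pow_of_forall_pow_ne {F : Type u} [Field F] [CharP F p] {x : F}
    (hx : ∀ y : F, y ^ p ≠ x) :
    ∃ (E : Type u) (_ : Field E) (_ : Algebra F E) (α : E) (b : Basis (Fin p) F E),
      α ^ p = algebraMap F E x ∧ ∀ k, b k = α ^ (k : ℕ) := by
  have hp : p.Prime := Fact.out
  have : Fact (Irreducible (X ^ p - C x)) := ⟨X_pow_sub_C_irreducible_of_prime hp hx⟩
  let pb := AdjoinRoot.powerBasis' (monic_X_pow_sub_C x hp.ne_zero)
  refine ⟨AdjoinRoot (X ^ p - C x), inferInstance, inferInstance, AdjoinRoot.root _,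
    pb.basis.reindex (finCongr natDegree_X_pow_sub_C), ?_, fun k => ?_⟩
  · rw [AdjoinRoot.algebraMap_eq]
    exact root_X_pow_sub_C_pow p x
  · rw [Basis.reindex_apply, PowerBasis.basis_eq_pow, AdjoinRoot.powerBasis'_gen]
    rfl

variable {F : Type u} [Field F] [CharP F p] {ι κ : Type*} [Fintype ι] [Fintype κ]

lemma WeakVishikEquiv.symm {φ : ι → F} {ψ : κ → F} (h : WeakVishikEquiv p φ ψ) :
    WeakVishikEquiv p ψ φ :=
  ⟨h.1.symm, fun E _ _ f α hα hE => (h.2 E f α hα hE).symm⟩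

lemma isometric_mul_of_weakVishikEquiv {φ : ι → F} {ψ : κ → F} (hφ : Anisotropic p φ)
    (hψ : Anisotropic p ψ) (h : WeakVishikEquiv p φ ψ) {x : F} (hx : x ≠ 0)
    (hiso : Isometric p (fun i => x * φ i) φ) : Isometric p (fun j => x * ψ j) ψ := by
  by_cases hpow : ∃ y : F, y ^ p = x
  · obtain ⟨y, rfl⟩ := hpow
    exact isometric_pow_mul p ψ (ne_zero_pow (Fact.out : p.Prime).ne_zero hx)
  rw [not_exists] at hpow
  obtain ⟨E, _, _, α, b, hα, hb⟩ := exists_basis_pow_of_forall_pow_ne p hpow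
  have : CharP E p := charP_of_injective_algebraMap (algebraMap F E).injective p
  have hdef := h.2 E (algebraMap F E) α ⟨x, hα.symm⟩ (closure_insert_eq_top_of_basis b hb)
  have hφE := defect_add_finrank_valueSpace p (algebraMap F E ∘ φ)
  have hψE := defect_add_finrank_valueSpace p (algebraMap F E ∘ ψ)
  rw [isometric_mul_self_iff p hφ hx, finrank_valueSpace_tensor_powers p hα b hb] at hiso
  rw [isometric_mul_self_iff p hψ hx, finrank_valueSpace_tensor_powers p hα b hb]
  have hU : finrank E (valueSpace p (algebraMap F E ∘ ψ)) =
      finrank E (valueSpace p (algebraMap F E ∘ φ)) := by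
    have := h.1
    omega
  rw [hU, hiso, h.1]

lemma simFactors_subset {φ : ι → F} {ψ : κ → F} (hφ : Anisotropic p φ) (hψ : Anisotropic p ψ)
    (h : WeakVishikEquiv p φ ψ) : simFactors p φ ⊆ simFactors p ψ := by
  rintro x (⟨hx, hiso⟩ | hx)
  · exact Or.inl ⟨hx, isometric_mul_of_weakVishikEquiv p hφ hψ h hx hiso⟩
  · exact Or.inr hx

end Extension

end QLF

/-- Weakly Vishik equivalent anisotropic quasilinear `p`-forms
have exactly the same similarity factors: `G_F(φ) = G_F(ψ)`. -/
theorem stmt_1 (p : ℕ) [Fact p.Prime] {F : Type u} [Field F] [CharP F p]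
    {n m : ℕ} (φ : Fin n → F) (ψ : Fin m → F)
    (hφ : QLF.Anisotropic p φ) (hψ : QLF.Anisotropic p ψ)
    (h : QLF.WeakVishikEquiv p φ ψ) :
    QLF.simFactors p φ = QLF.simFactors p ψ :=
  (QLF.simFactors_subset p hφ hψ h).antisymm (QLF.simFactors_subset p hψ hφ h.symm)
end

section
/- Let F be a field of characteristic 2 and let φ, ψ be anisotropic totally singular quadratic forms over F that are weakly Vishik equivalent. Assume that φ is a special quasi-Pfister neighbor given by a triple (π, b, σ), and that cπ ⊆ ψ for some c ∈ F×. Then ψ is a special quasi-Pfister neighbor given by a triple (π, b, ρ) for some totally singular quadratic form ρ over F with ρ ⊆ π, and moreover ρ and σ are weakly Vishik equivalent. -/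
/-!
Diagonal quasilinear `p`-forms over a field `F` of characteristic `p`,
following Hoffmann and Zemková. A form of dimension `n` is recorded by its
coefficient tuple `a : ι → F` (for a finite index type `ι`), the form being
`x ↦ ∑ i, a i * (x i)^p`.
-/

universe u

/-!
In characteristic 2 a diagonal form `g` over `F` is controlled by the `F²(t)`-spans of its
coefficients: `g` is anisotropic iff its coefficients are `F²`-linearly independent, and over
`E = F(α)` with `α² = t` the defect of `g_E` is `dim g - dim_{F²(t)} span g`, because squaring
identifies `E` with `F²(t)`. So `φ ∼ᵥ₀ ψ` says exactly that the spans of `φ` and `ψ` have the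
same dimension over every `F²(t)`.

Write `P_t` for the span of the coefficients of `π`; it is a field. Since `b·σ ⊆ P_b`, the span of
`φ` over `F²(b)` is `a·P_b`, so the span of `ψ` over `F²(b)` has the dimension of `c·P_b ⊆ span ψ`
and equals it. Descending to `F²` gives `span ψ ⊆ c·(P_0 + b·P_0)`; a complement of `c·P_0`
inside `span ψ` chosen in `c·b·P_0` is `c·b·span ρ` for a form `ρ ⊆ π`, and `ψ ≃ c(π ⊥ bρ)`.
Finally `b ∉ P_0` (otherwise `φ` would be isotropic), and comparing dimensions over each `F²(t)`
shows that the spans of `ρ` and `σ` have equal dimension there: if `b ∈ P_t` then `t ∉ P_0` and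
both stay linearly independent; if `b ∉ P_t` the sum `P_t + b·span` is direct.
-/

namespace QLF

open Submodule Set Module

section Forms

variable {F : Type*} [Field F] {ι κ : Type*} [Fintype ι] [Fintype κ]

theorem eval_mul_left (c : F) (g x : ι → F) :
    eval 2 (fun i ↦ c * g i) x = c * eval 2 g x := by
  simp only [eval, Finset.mul_sum, mul_assoc]

theorem eval_single [DecidableEq ι] (g : ι → F) (i : ι) : eval 2 g (Pi.single i 1) = g i := by
  simp [eval, Pi.single_apply]

theorem Anisotropic.of_mul_left {c : F} {g : ι → F}
    (h : Anisotropic 2 (fun i ↦ c * g i)) : Anisotropic 2 g :=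
  fun ⟨x, hx, he⟩ ↦ h ⟨x, hx, by rw [eval_mul_left, he, mul_zero]⟩

theorem Anisotropic.of_subform {g₁ : ι → F} {g₂ : κ → F} (h₂ : Anisotropic 2 g₂)
    (h : Subform 2 g₁ g₂) : Anisotropic 2 g₁ := by
  obtain ⟨T, hT, he⟩ := h
  rintro ⟨x, hx, hx0⟩
  exact h₂ ⟨T x, (map_ne_zero_iff T hT).mpr hx, by rw [← he, hx0]⟩

theorem Isometric.subform {g₁ : ι → F} {g₂ : κ → F} (h : Isometric 2 g₁ g₂) :
    Subform 2 g₁ g₂ :=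
  let ⟨T, hT⟩ := h; ⟨T, T.injective, hT⟩

theorem Isometric.symm {g₁ : ι → F} {g₂ : κ → F} (h : Isometric 2 g₁ g₂) :
    Isometric 2 g₂ g₁ :=
  let ⟨T, hT⟩ := h; ⟨T.symm, fun y ↦ by rw [hT, T.apply_symm_apply]⟩

theorem finrank_map_mulLeft {K : Subfield F} {a : F} (ha : a ≠ 0) (M : Submodule K F) :
    finrank K (M.map (LinearMap.mulLeft K a)) = finrank K M :=
  (LinearEquiv.finrank_eq (M.equivMapOfInjective _ (mul_right_injective₀ ha))).symm

theorem pfister_mul_pfister {r : ℕ} (πc : Fin r → F) (e e' : Fin r → Fin 2) :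
    ∃ k : F, pfister 2 πc e * pfister 2 πc e' = k ^ 2 * pfister 2 πc (e + e') := by
  classical
  refine ⟨∏ i, if e i = 1 ∧ e' i = 1 then πc i else 1, ?_⟩
  simp only [pfister, Pi.add_apply, ← Finset.prod_mul_distrib, ← Finset.prod_pow]
  refine Finset.prod_congr rfl fun i _ ↦ ?_
  generalize e i = x, e' i = y
  fin_cases x <;> fin_cases y <;> simp [sq]

theorem Isometric.card_eq {g₁ : ι → F} {g₂ : κ → F} (h : Isometric 2 g₁ g₂) :
    Fintype.card ι = Fintype.card κ := by
  obtain ⟨T, -⟩ := h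
  simpa using T.finrank_eq

end Forms

section SqAdjoin

variable {F : Type*} [Field F] [CharP F 2]

/-- The subfield `F²(t)` of `F`. -/
def sqAdjoin (t : F) : Subfield F where
  carrier := {x | ∃ u v : F, x = u ^ 2 + t * v ^ 2}
  zero_mem' := ⟨0, 0, by ring⟩
  one_mem' := ⟨1, 0, by ring⟩
  add_mem' := by
    rintro _ _ ⟨u, v, rfl⟩ ⟨u', v', rfl⟩
    exact ⟨u + u', v + v', by rw [CharTwo.add_sq, CharTwo.add_sq]; ring⟩
  mul_mem' := by
    rintro _ _ ⟨u, v, rfl⟩ ⟨u', v', rfl⟩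
    exact ⟨u * u' + t * (v * v'), u * v' + u' * v, by rw [CharTwo.add_sq, CharTwo.add_sq]; ring⟩
  neg_mem' := by
    rintro _ ⟨u, v, rfl⟩
    exact ⟨u, v, by rw [CharTwo.neg_eq]⟩
  inv_mem' := by
    rintro _ ⟨u, v, rfl⟩
    refine ⟨u * (u ^ 2 + t * v ^ 2)⁻¹, v * (u ^ 2 + t * v ^ 2)⁻¹, ?_⟩
    rw [mul_pow, mul_pow, ← mul_assoc, ← add_mul, pow_two (_⁻¹), ← mul_assoc]
    rcases eq_or_ne (u ^ 2 + t * v ^ 2) 0 with h | h <;> simp [h]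

theorem mem_sqAdjoin {t x : F} : x ∈ sqAdjoin t ↔ ∃ u v : F, x = u ^ 2 + t * v ^ 2 := Iff.rfl

theorem sq_mem_sqAdjoin (t x : F) : x ^ 2 ∈ sqAdjoin t := ⟨x, 0, by ring⟩

theorem self_mem_sqAdjoin (t : F) : t ∈ sqAdjoin t := ⟨0, 1, by ring⟩

theorem mem_sqAdjoin_zero {x : F} : x ∈ sqAdjoin (0 : F) ↔ ∃ u : F, x = u ^ 2 := by
  simp [mem_sqAdjoin]

end SqAdjoin

section Spans

variable {F : Type*} [Field F] [CharP F 2] {ι κ : Type*}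

def sqSpan (t : F) (g : ι → F) : Submodule (sqAdjoin t) F :=
  span (sqAdjoin t) (range g)

noncomputable def sqRank (t : F) (g : ι → F) : ℕ :=
  finrank (sqAdjoin t) (sqSpan t g)

theorem smul_sqAdjoin_def {t : F} (k : sqAdjoin t) (x : F) : k • x = (k : F) * x := rfl

theorem mem_sqSpan_self (t : F) (g : ι → F) (i : ι) : g i ∈ sqSpan t g :=
  subset_span ⟨i, rfl⟩

theorem sqSpan_mul_left (t c : F) (g : ι → F) :
    sqSpan t (fun i ↦ c * g i) = (sqSpan t g).map (LinearMap.mulLeft (sqAdjoin t) c) := by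
  rw [sqSpan, sqSpan, ← span_image, ← range_comp]
  rfl

theorem sqSpan_sumElim (t : F) (g₁ : ι → F) (g₂ : κ → F) :
    sqSpan t (Sum.elim g₁ g₂) = sqSpan t g₁ ⊔ sqSpan t g₂ := by
  rw [sqSpan, Sum.elim_range, span_union]
  rfl

theorem exists_eq_add_mul_of_mem_sqSpan {t z : F} {g : ι → F} (hz : z ∈ sqSpan t g) :
    ∃ x ∈ sqSpan 0 g, ∃ y ∈ sqSpan 0 g, z = x + t * y := by
  induction hz using span_induction with
  | mem w hw => exact ⟨w, subset_span hw, 0, zero_mem _, by ring⟩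
  | zero => exact ⟨0, zero_mem _, 0, zero_mem _, by ring⟩
  | add _ _ _ _ h₁ h₂ =>
    obtain ⟨x₁, hx₁, y₁, hy₁, rfl⟩ := h₁
    obtain ⟨x₂, hx₂, y₂, hy₂, rfl⟩ := h₂
    exact ⟨x₁ + x₂, add_mem hx₁ hx₂, y₁ + y₂, add_mem hy₁ hy₂, by ring⟩
  | smul k _ _ h =>
    obtain ⟨x, hx, y, hy, rfl⟩ := h
    obtain ⟨u, v, hk⟩ := k.2
    refine ⟨u ^ 2 * x + (t * v) ^ 2 * y, add_mem (smul_mem _ ⟨u ^ 2, sq_mem_sqAdjoin 0 u⟩ hx)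
        (smul_mem _ ⟨(t * v) ^ 2, sq_mem_sqAdjoin 0 _⟩ hy),
      u ^ 2 * y + v ^ 2 * x, add_mem (smul_mem _ ⟨u ^ 2, sq_mem_sqAdjoin 0 u⟩ hy)
        (smul_mem _ ⟨v ^ 2, sq_mem_sqAdjoin 0 v⟩ hx), ?_⟩
    rw [smul_sqAdjoin_def, hk]
    ring

theorem map_mulLeft_self_le {t : F} (M : Submodule (sqAdjoin t) F) :
    M.map (LinearMap.mulLeft (sqAdjoin t) t) ≤ M := by
  rintro _ ⟨x, hx, rfl⟩
  exact smul_mem M (⟨t, self_mem_sqAdjoin t⟩ : sqAdjoin t) hx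

theorem sqRank_mul_left {t a : F} (ha : a ≠ 0) (g : ι → F) :
    sqRank t (fun i ↦ a * g i) = sqRank t g := by
  rw [sqRank, sqSpan_mul_left, finrank_map_mulLeft ha, sqRank]

instance (t : F) (g : ι → F) [Finite ι] : FiniteDimensional (sqAdjoin t) (sqSpan t g) :=
  FiniteDimensional.span_of_finite _ (finite_range g)

variable [Fintype ι] [Fintype κ]

theorem eval_mem_sqSpan (t : F) (g x : ι → F) : eval 2 g x ∈ sqSpan t g :=
  sum_mem fun i _ ↦ by
    simpa only [smul_sqAdjoin_def, mul_comm] using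
      smul_mem _ (⟨x i ^ 2, sq_mem_sqAdjoin t (x i)⟩ : sqAdjoin t) (mem_sqSpan_self t g i)

theorem anisotropic_iff_linearIndependent (g : ι → F) :
    Anisotropic 2 g ↔ LinearIndependent (sqAdjoin (0 : F)) g := by
  have hsq : ∀ x : ι → F, eval 2 g x =
      ∑ i, (⟨x i ^ 2, sq_mem_sqAdjoin 0 (x i)⟩ : sqAdjoin (0 : F)) • g i := fun x ↦
    Finset.sum_congr rfl fun i _ ↦ by rw [smul_sqAdjoin_def, mul_comm]
  rw [Fintype.linearIndependent_iff, Anisotropic, Isotropic]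
  constructor
  · intro han k hk i
    choose u hu using fun i ↦ mem_sqAdjoin_zero.mp (k i).2
    have hu0 : u = 0 := by
      by_contra hu0
      refine han ⟨u, hu0, ?_⟩
      rw [hsq, ← hk]
      exact Finset.sum_congr rfl fun i _ ↦ by rw [smul_sqAdjoin_def, smul_sqAdjoin_def, hu i]
    ext
    simp [hu i, hu0]
  · rintro hli ⟨x, hx, hx0⟩
    refine hx (funext fun i ↦ ?_)
    have := congrArg Subtype.val (hli _ ((hsq x).symm.trans hx0) i)
    simpa using this

theorem Subform.sqSpan_le {g₁ : ι → F} {g₂ : κ → F} (h : Subform 2 g₁ g₂) (t : F) :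
    sqSpan t g₁ ≤ sqSpan t g₂ := by
  classical
  obtain ⟨T, -, hT⟩ := h
  refine span_le.mpr ?_
  rintro _ ⟨i, rfl⟩
  rw [← eval_single g₁ i, hT]
  exact eval_mem_sqSpan t g₂ _

theorem Isometric.sqSpan_eq {g₁ : ι → F} {g₂ : κ → F} (h : Isometric 2 g₁ g₂) (t : F) :
    sqSpan t g₁ = sqSpan t g₂ :=
  le_antisymm (h.subform.sqSpan_le t) (h.symm.subform.sqSpan_le t)

theorem Isometric.sqRank_eq {g₁ : ι → F} {g₂ : κ → F} (h : Isometric 2 g₁ g₂) (t : F) :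
    sqRank t g₁ = sqRank t g₂ := by
  rw [sqRank, sqRank, h.sqSpan_eq]

theorem sqRank_le_card (t : F) (g : ι → F) : sqRank t g ≤ Fintype.card ι :=
  finrank_range_le_card g

theorem Anisotropic.sqRank_zero_eq {g : ι → F} (h : Anisotropic 2 g) :
    sqRank 0 g = Fintype.card ι :=
  finrank_span_eq_card ((anisotropic_iff_linearIndependent g).mp h)

theorem exists_linearMap_eval_eq {g₁ : ι → F} {g₂ : κ → F}
    (hmem : ∀ i, g₁ i ∈ sqSpan 0 g₂) :
    ∃ T : (ι → F) →ₗ[F] (κ → F), ∀ x, eval 2 g₁ x = eval 2 g₂ (T x) := by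
  choose k hk using fun i ↦ (mem_span_range_iff_exists_fun _).mp (hmem i)
  choose m hm using fun i j ↦ mem_sqAdjoin_zero.mp (k i j).2
  have hg₁ : ∀ i, g₁ i = ∑ j, m i j ^ 2 * g₂ j := fun i ↦ by
    simp only [← hk i, smul_sqAdjoin_def, hm]
  refine ⟨(Matrix.of fun j i ↦ m i j).mulVecLin, fun x ↦ ?_⟩
  simp only [eval, Matrix.mulVecLin_apply, Matrix.mulVec, dotProduct, Matrix.of_apply,
    CharTwo.sum_sq, Finset.mul_sum, hg₁, Finset.sum_mul]
  rw [Finset.sum_comm]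
  exact Finset.sum_congr rfl fun _ _ ↦ Finset.sum_congr rfl fun _ _ ↦ by ring

theorem subform_of_forall_mem_sqSpan {g₁ : ι → F} {g₂ : κ → F} (han : Anisotropic 2 g₁)
    (hmem : ∀ i, g₁ i ∈ sqSpan 0 g₂) : Subform 2 g₁ g₂ := by
  obtain ⟨T, hT⟩ := exists_linearMap_eval_eq hmem
  refine ⟨T, (injective_iff_map_eq_zero T).mpr fun x hx ↦ ?_, hT⟩
  by_contra hx0
  exact han ⟨x, hx0, by rw [hT, hx]; simp [eval]⟩

theorem isometric_of_forall_mem_sqSpan {g₁ : ι → F} {g₂ : κ → F} (han : Anisotropic 2 g₁)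
    (hmem : ∀ i, g₁ i ∈ sqSpan 0 g₂) (hcard : Fintype.card ι = Fintype.card κ) :
    Isometric 2 g₁ g₂ := by
  obtain ⟨T, hT, he⟩ := subform_of_forall_mem_sqSpan han hmem
  exact ⟨LinearMap.linearEquivOfInjective T hT (by simp [hcard]), he⟩

end Spans

section Defect

variable {F : Type*} [Field F] [CharP F 2] {E : Type*} [Field E] [CharP E 2]
  {f : F →+* E} {α : E} {t : F}

theorem sq_mem_map_sqAdjoin (hft : f t = α ^ 2)
    (hcl : Subfield.closure (insert α (range f)) = ⊤) (e : E) :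
    e ^ 2 ∈ (sqAdjoin t).map f := by
  have hle : Subfield.closure (insert α (range f)) ≤
      ((sqAdjoin t).map f).comap (frobenius E 2) := by
    rw [Subfield.closure_le]
    rintro _ (rfl | ⟨x, rfl⟩)
    · exact ⟨t, self_mem_sqAdjoin t, hft⟩
    · exact ⟨x ^ 2, sq_mem_sqAdjoin t x, map_pow f x 2⟩
  exact hle (hcl ▸ Subfield.mem_top e)

theorem exists_ringEquiv_sqAdjoin (hft : f t = α ^ 2)
    (hcl : Subfield.closure (insert α (range f)) = ⊤) :
    ∃ τ : E ≃+* sqAdjoin t, ∀ e, f (τ e) = e ^ 2 := by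
  let S := (sqAdjoin t).map f
  let sq : E →+* S := (frobenius E 2).codRestrict S (sq_mem_map_sqAdjoin hft hcl)
  let fS : sqAdjoin t →+* S := (f.comp (sqAdjoin t).subtype).codRestrict S fun k ↦ ⟨k, k.2, rfl⟩
  have hsq : Function.Bijective sq := by
    refine ⟨fun x y h ↦ frobenius_inj E 2 (congrArg Subtype.val h), ?_⟩
    rintro ⟨_, _, ⟨u, v, rfl⟩, rfl⟩
    refine ⟨f u + α * f v, Subtype.ext ?_⟩
    change (f u + α * f v) ^ 2 = f (u ^ 2 + t * v ^ 2)
    rw [CharTwo.add_sq, mul_pow, ← hft]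
    simp
  have hfS : Function.Bijective fS := by
    refine ⟨fun x y h ↦ Subtype.ext (f.injective (congrArg Subtype.val h)), ?_⟩
    rintro ⟨_, k, hk, rfl⟩
    exact ⟨⟨k, hk⟩, rfl⟩
  refine ⟨(RingEquiv.ofBijective sq hsq).trans (RingEquiv.ofBijective fS hfS).symm, fun e ↦ ?_⟩
  exact congrArg Subtype.val ((RingEquiv.ofBijective fS hfS).apply_symm_apply (sq e))

theorem defect_add_sqRank (hft : f t = α ^ 2)
    (hcl : Subfield.closure (insert α (range f)) = ⊤) {ι : Type*} [Fintype ι] (g : ι → F) :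
    defect 2 (f ∘ g) + sqRank t g = Fintype.card ι := by
  obtain ⟨τ, hτ⟩ := exists_ringEquiv_sqAdjoin hft hcl
  let L := Fintype.linearCombination (sqAdjoin t) g
  have hL : ∀ x : ι → E, eval 2 (f ∘ g) x = f (L (τ ∘ x)) := fun x ↦ by
    simp [L, eval, Fintype.linearCombination_apply, smul_sqAdjoin_def, hτ, mul_comm]
  have hmem : ∀ x, x ∈ zeroSubmodule 2 (f ∘ g) ↔ τ ∘ x ∈ LinearMap.ker L := fun x ↦ by
    rw [LinearMap.mem_ker, ← map_eq_zero_iff f f.injective, ← hL]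
    rfl
  let j : zeroSubmodule 2 (f ∘ g) ≃+ LinearMap.ker L :=
    { toFun := fun x ↦ ⟨τ ∘ x, (hmem x).mp x.2⟩
      invFun := fun y ↦ ⟨τ.symm ∘ y, (hmem _).mpr (by simp [Function.comp_def])⟩
      left_inv := fun x ↦ by ext; simp
      right_inv := fun y ↦ by ext; simp
      map_add' := fun x y ↦ by ext; simp }
  have hj : finrank E (zeroSubmodule 2 (f ∘ g)) = finrank (sqAdjoin t) (LinearMap.ker L) := by
    have := lift_rank_eq_of_equiv_equiv τ j τ.bijective fun r x ↦ by ext; simp [j]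
    simpa [finrank] using congrArg Cardinal.toNat this
  rw [defect, hj, sqRank, sqSpan, ← Fintype.range_linearCombination, add_comm,
    LinearMap.finrank_range_add_finrank_ker, finrank_fintype_fun_eq_card]

end Defect

section WeakVishik

open Polynomial

variable {F : Type u} [Field F] [CharP F 2]

theorem exists_extension_sq_eq (t : F) :
    ∃ (E : Type u) (_ : Field E) (_ : CharP E 2) (f : F →+* E) (α : E),
      f t = α ^ 2 ∧ Subfield.closure (insert α (range f)) = ⊤ := by
  let E := (X ^ 2 - C t : F[X]).SplittingField
  have hchar : CharP E 2 := charP_of_injective_algebraMap (algebraMap F E).injective 2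
  have hroot : ∀ β : E, β ∈ (X ^ 2 - C t).rootSet E ↔ β ^ 2 = algebraMap F E t := fun β ↦ by
    simp [mem_rootSet, X_pow_sub_C_ne_zero two_pos, sub_eq_zero]
  obtain ⟨α, hα⟩ := (SplittingField.splits (X ^ 2 - C t)).exists_eval_eq_zero (by
    rw [degree_map, degree_X_pow_sub_C two_pos]; decide)
  have hαt : α ^ 2 = algebraMap F E t := by simpa [sub_eq_zero] using hα
  have hset : (X ^ 2 - C t).rootSet E = {α} := by
    ext β
    rw [hroot, mem_singleton_iff, ← hαt]
    exact (frobenius_inj E 2).eq_iff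
  refine ⟨E, inferInstance, hchar, algebraMap F E, α, hαt.symm, ?_⟩
  rw [insert_eq, union_comm, ← IntermediateField.adjoin_toSubfield,
    IntermediateField.adjoin_eq_top_of_algebra _ _ (hset ▸ SplittingField.adjoin_rootSet _)]
  rfl

theorem weakVishikEquiv_iff {ι κ : Type*} [Fintype ι] [Fintype κ] {g₁ : ι → F} {g₂ : κ → F} :
    WeakVishikEquiv 2 g₁ g₂ ↔
      Fintype.card ι = Fintype.card κ ∧ ∀ t, sqRank t g₁ = sqRank t g₂ := by
  refine and_congr_right fun hcard ↦ ⟨fun h t ↦ ?_, fun h E _ _ f α ⟨t, ht⟩ hcl ↦ ?_⟩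
  · obtain ⟨E, _, _, f, α, ht, hcl⟩ := exists_extension_sq_eq t
    have := h E f α ⟨t, ht⟩ hcl
    have h₁ := defect_add_sqRank ht hcl g₁
    have h₂ := defect_add_sqRank ht hcl g₂
    omega
  · have h₁ := defect_add_sqRank ht hcl g₁
    have h₂ := defect_add_sqRank ht hcl g₂
    have := h t
    omega

end WeakVishik

section Pfister

variable {F : Type*} [Field F] [CharP F 2] {r : ℕ} {πc : Fin r → F} {t : F}

theorem mul_mem_sqSpan_pfister {x y : F} (hx : x ∈ sqSpan t (pfister 2 πc))
    (hy : y ∈ sqSpan t (pfister 2 πc)) : x * y ∈ sqSpan t (pfister 2 πc) := by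
  have hle : sqSpan t (pfister 2 πc) * sqSpan t (pfister 2 πc) ≤ sqSpan t (pfister 2 πc) := by
    rw [sqSpan, span_mul_span, span_le]
    rintro _ ⟨_, ⟨e, rfl⟩, _, ⟨e', rfl⟩, rfl⟩
    obtain ⟨k, hk⟩ := pfister_mul_pfister πc e e'
    change pfister 2 πc e * pfister 2 πc e' ∈ _
    rw [hk]
    exact smul_mem _ (⟨k ^ 2, sq_mem_sqAdjoin t k⟩ : sqAdjoin t) (mem_sqSpan_self t _ _)
  exact hle (mul_mem_mul hx hy)

theorem div_mem_sqSpan_pfister {x y : F} (hx : x ∈ sqSpan t (pfister 2 πc))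
    (hy : y ∈ sqSpan t (pfister 2 πc)) : x / y ∈ sqSpan t (pfister 2 πc) := by
  have hinv : y⁻¹ = (⟨y⁻¹ ^ 2, sq_mem_sqAdjoin t y⁻¹⟩ : sqAdjoin t) • y := by
    rw [smul_sqAdjoin_def]
    rcases eq_or_ne y 0 with rfl | hy0
    · simp
    · field_simp
  rw [div_eq_mul_inv, hinv]
  exact mul_mem_sqSpan_pfister hx (smul_mem _ _ hy)

theorem mem_sqSpan_zero_of_mem_sqSpan {b : F} (ht : t ∈ sqSpan 0 (pfister 2 πc))
    (hb : b ∈ sqSpan t (pfister 2 πc)) : b ∈ sqSpan 0 (pfister 2 πc) := by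
  obtain ⟨x, hx, y, hy, rfl⟩ := exists_eq_add_mul_of_mem_sqSpan hb
  exact add_mem hx (mul_mem_sqSpan_pfister ht hy)

theorem Anisotropic.linearIndependent_sqAdjoin {q : ℕ} {ζ : Fin q → F} (hζ : Anisotropic 2 ζ)
    (hζπ : ∀ j, ζ j ∈ sqSpan 0 (pfister 2 πc)) (ht : t ∉ sqSpan 0 (pfister 2 πc)) :
    LinearIndependent (sqAdjoin t) ζ := by
  have hζπ' : sqSpan 0 ζ ≤ sqSpan 0 (pfister 2 πc) := span_le.mpr (range_subset_iff.mpr hζπ)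
  rw [Fintype.linearIndependent_iff]
  intro l hl
  choose u v huv using fun j ↦ (l j).2
  have hsum : eval 2 ζ u = t * eval 2 ζ v := by
    rw [← CharTwo.add_eq_zero, ← hl]
    simp only [eval, smul_sqAdjoin_def, huv, Finset.mul_sum, ← Finset.sum_add_distrib]
    exact Finset.sum_congr rfl fun _ _ ↦ by ring
  have hv : eval 2 ζ v = 0 := by
    by_contra hv
    refine ht ?_
    rw [eq_div_of_mul_eq hv hsum.symm]
    exact div_mem_sqSpan_pfister (hζπ' (eval_mem_sqSpan 0 ζ u)) (hζπ' (eval_mem_sqSpan 0 ζ v))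
  rw [hv, mul_zero] at hsum
  have hu0 : u = 0 := not_not.mp fun hu ↦ hζ ⟨u, hu, hsum⟩
  have hv0 : v = 0 := not_not.mp fun hv' ↦ hζ ⟨v, hv', hv⟩
  intro j
  ext
  simp [huv, hu0, hv0]

theorem finrank_sup_map_mulLeft {b : F} (hb : b ∉ sqSpan t (pfister 2 πc))
    {S : Submodule (sqAdjoin t) F} (hS : S ≤ sqSpan t (pfister 2 πc)) :
    finrank (sqAdjoin t) ↥(sqSpan t (pfister 2 πc) ⊔ S.map (LinearMap.mulLeft _ b)) =
      finrank (sqAdjoin t) (sqSpan t (pfister 2 πc)) + finrank (sqAdjoin t) S := by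
  have hb0 : b ≠ 0 := fun h ↦ hb (h ▸ zero_mem _)
  have hdisj : sqSpan t (pfister 2 πc) ⊓ S.map (LinearMap.mulLeft _ b) = ⊥ := by
    refine eq_bot_iff.mpr ?_
    rintro _ ⟨hbw, w, hw, rfl⟩
    rw [mem_bot]
    by_contra hbw0
    refine hb ?_
    rw [← mul_div_cancel_right₀ b (right_ne_zero_of_mul hbw0)]
    exact div_mem_sqSpan_pfister hbw (hS hw)
  have : FiniteDimensional (sqAdjoin t) S := Submodule.finiteDimensional_of_le hS
  have := finrank_sup_add_finrank_inf_eq (sqSpan t (pfister 2 πc)) (S.map (LinearMap.mulLeft _ b))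
  rwa [hdisj, finrank_bot, add_zero, finrank_map_mulLeft hb0] at this

theorem sqRank_eq_of_sqRank_sumElim_eq {b : F} (hb : b ∉ sqSpan 0 (pfister 2 πc))
    (hπ : Anisotropic 2 (pfister 2 πc)) {q : ℕ} {ζ ζ' : Fin q → F}
    (hζ : Subform 2 ζ (pfister 2 πc)) (hζ' : Subform 2 ζ' (pfister 2 πc))
    (h : sqRank t (Sum.elim (pfister 2 πc) fun j ↦ b * ζ j) =
      sqRank t (Sum.elim (pfister 2 πc) fun j ↦ b * ζ' j)) :
    sqRank t ζ = sqRank t ζ' := by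
  by_cases hbt : b ∈ sqSpan t (pfister 2 πc)
  · have ht : t ∉ sqSpan 0 (pfister 2 πc) := fun ht ↦ hb (mem_sqSpan_zero_of_mem_sqSpan ht hbt)
    have hrank : ∀ ξ : Fin q → F, Subform 2 ξ (pfister 2 πc) → sqRank t ξ = q := fun ξ hξ ↦ by
      rw [sqRank, sqSpan, finrank_span_eq_card ((hπ.of_subform hξ).linearIndependent_sqAdjoin
        (fun j ↦ hξ.sqSpan_le 0 (mem_sqSpan_self 0 ξ j)) ht), Fintype.card_fin]
    rw [hrank ζ hζ, hrank ζ' hζ']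
  · have hrank : ∀ ξ : Fin q → F, Subform 2 ξ (pfister 2 πc) →
        sqRank t (Sum.elim (pfister 2 πc) fun j ↦ b * ξ j) =
          sqRank t (pfister 2 πc) + sqRank t ξ := fun ξ hξ ↦ by
      rw [sqRank, sqSpan_sumElim, sqSpan_mul_left, finrank_sup_map_mulLeft hbt (hξ.sqSpan_le t),
        sqRank, sqRank]
    rw [hrank ζ hζ, hrank ζ' hζ'] at h
    omega

theorem notMem_sqSpan_of_anisotropic {b : F} {κ : Type*} [Fintype κ] [Nonempty κ]
    {σ : κ → F} (hσ : Subform 2 σ (pfister 2 πc))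
    (h : Anisotropic 2 (Sum.elim (pfister 2 πc) fun j ↦ b * σ j)) :
    b ∉ sqSpan 0 (pfister 2 πc) := by
  intro hb
  have hle : sqSpan 0 (Sum.elim (pfister 2 πc) fun j ↦ b * σ j) ≤ sqSpan 0 (pfister 2 πc) := by
    rw [sqSpan_sumElim, sqSpan_mul_left]
    refine sup_le le_rfl ?_
    rintro _ ⟨x, hx, rfl⟩
    exact mul_mem_sqSpan_pfister hb (hσ.sqSpan_le 0 hx)
  have hrank := finrank_mono hle
  rw [← sqRank, ← sqRank, h.sqRank_zero_eq, Fintype.card_sum] at hrank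
  have := sqRank_le_card 0 (pfister 2 πc)
  have := Fintype.card_pos (α := κ)
  omega

end Pfister

theorem exists_le_disjoint_sup_eq {α : Type*} [Lattice α] [BoundedOrder α] [IsModularLattice α]
    [ComplementedLattice α] {a b w : α} (haw : a ≤ w) (hw : w ≤ a ⊔ b) :
    ∃ u ≤ b, Disjoint a u ∧ a ⊔ u = w := by
  obtain ⟨u, hdisj, hsup⟩ :=
    IsModularLattice.exists_disjoint_and_sup_eq (inf_le_right : a ⊓ (w ⊓ b) ≤ w ⊓ b)
  have hu : u ≤ w ⊓ b := hsup ▸ le_sup_right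
  refine ⟨u, hu.trans inf_le_right, ?_, le_antisymm (sup_le haw (hu.trans inf_le_left)) ?_⟩
  · rw [disjoint_iff, ← inf_eq_right.mpr hu, ← inf_assoc, disjoint_iff.mp hdisj]
  · calc w = (a ⊔ b) ⊓ w := (inf_eq_right.mpr hw).symm
      _ = a ⊔ w ⊓ b := by rw [sup_inf_assoc_of_le b haw, inf_comm]
      _ ≤ a ⊔ u := by
        rw [← hsup]
        exact sup_le le_sup_left (sup_le (inf_le_left.trans le_sup_left) le_sup_right)

section Neighbor

variable {F : Type*} [Field F] [CharP F 2] {ι κ : Type*} [Fintype ι] [Fintype κ]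
  {ψ : ι → F} {g : κ → F} {b c : F}

theorem sqSpan_le_of_sqRank_le (hc : c ≠ 0) (hcg : Subform 2 (fun k ↦ c * g k) ψ)
    (hrank : sqRank b ψ ≤ sqRank b g) :
    sqSpan 0 ψ ≤ (sqSpan 0 g ⊔ (sqSpan 0 g).map (LinearMap.mulLeft _ b)).map
      (LinearMap.mulLeft _ c) := by
  have hle := hcg.sqSpan_le b
  rw [sqSpan_mul_left] at hle
  have heq : sqSpan b ψ = (sqSpan b g).map (LinearMap.mulLeft _ c) :=
    (eq_of_le_of_finrank_le hle (by rwa [finrank_map_mulLeft hc])).symm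
  refine span_le.mpr (range_subset_iff.mpr fun i ↦ ?_)
  obtain ⟨z, hz, hzi⟩ := heq ▸ mem_sqSpan_self b ψ i
  obtain ⟨x, hx, y, hy, rfl⟩ := exists_eq_add_mul_of_mem_sqSpan hz
  exact ⟨_, add_mem (mem_sup_left hx) (mem_sup_right ⟨y, hy, rfl⟩), hzi⟩

theorem exists_subform_isometric_sumElim {s : ℕ} (hψ : Anisotropic 2 ψ) (hg : Anisotropic 2 g)
    (hc : c ≠ 0) (hcg : Subform 2 (fun k ↦ c * g k) ψ)
    (hle : sqSpan 0 ψ ≤ (sqSpan 0 g ⊔ (sqSpan 0 g).map (LinearMap.mulLeft _ b)).map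
      (LinearMap.mulLeft _ c))
    (hcard : Fintype.card ι = Fintype.card κ + s) :
    ∃ ρ : Fin s → F, Subform 2 ρ g ∧
      Isometric 2 ψ (fun i ↦ c * Sum.elim g (fun j ↦ b * ρ j) i) := by
  have hgψ : (sqSpan 0 g).map (LinearMap.mulLeft _ c) ≤ sqSpan 0 ψ :=
    sqSpan_mul_left 0 c g ▸ hcg.sqSpan_le 0
  obtain ⟨U, hUb, hdisj, hsup⟩ := exists_le_disjoint_sup_eq hgψ (by rwa [Submodule.map_sup] at hle)
  have : FiniteDimensional (sqAdjoin (0 : F)) U := finiteDimensional_of_le (hsup ▸ le_sup_right)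
  have hU : finrank (sqAdjoin (0 : F)) U = s := by
    have := finrank_sup_add_finrank_inf_eq ((sqSpan 0 g).map (LinearMap.mulLeft _ c)) U
    rw [hsup, disjoint_iff.mp hdisj, finrank_bot, add_zero, finrank_map_mulLeft hc, ← sqRank,
      ← sqRank, hψ.sqRank_zero_eq, hg.sqRank_zero_eq, hcard] at this
    omega
  let v := Module.finBasisOfFinrankEq _ U hU
  have hv : ∀ j, ∃ x ∈ sqSpan 0 g, c * (b * x) = v j := fun j ↦ by
    obtain ⟨_, ⟨x, hx, rfl⟩, h⟩ := hUb (v j).2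
    exact ⟨x, hx, h⟩
  choose ρ hρg hρv using hv
  have hρ : Anisotropic 2 ρ := by
    rw [anisotropic_iff_linearIndependent]
    have hcomp : LinearMap.mulLeft (sqAdjoin (0 : F)) (c * b) ∘ ρ = U.subtype ∘ v :=
      funext fun j ↦ by simp [← hρv]
    exact .of_comp _ (hcomp ▸ v.linearIndependent.map' U.subtype (ker_subtype U))
  refine ⟨ρ, subform_of_forall_mem_sqSpan hρ hρg,
    isometric_of_forall_mem_sqSpan hψ (fun i ↦ ?_) (by simp [hcard])⟩
  suffices sqSpan 0 ψ ≤ sqSpan 0 (fun i ↦ c * Sum.elim g (fun j ↦ b * ρ j) i) from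
    this (mem_sqSpan_self 0 ψ i)
  rw [sqSpan_mul_left, sqSpan_sumElim, sqSpan_mul_left, Submodule.map_sup, ← hsup]
  refine sup_le le_sup_left (le_sup_of_le_right ?_)
  have hUv : span (sqAdjoin (0 : F)) (range (U.subtype ∘ v)) = U := by
    rw [range_comp, span_image, v.span_eq, map_subtype_top]
  rw [← hUv, span_le]
  rintro _ ⟨j, rfl⟩
  exact ⟨b * ρ j, ⟨ρ j, mem_sqSpan_self 0 ρ j, rfl⟩, hρv j⟩

end Neighbor

end QLF

theorem stmt_8_general {F : Type u} [Field F] [CharP F 2]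
    {n m r s : ℕ} (φ : Fin n → F) (ψ : Fin m → F)
    (hφan : QLF.Anisotropic 2 φ) (hψan : QLF.Anisotropic 2 ψ)
    (h : QLF.WeakVishikEquiv 2 φ ψ)
    (πc : Fin r → F) (b : F)
    (σ : Fin s → F) (hσπ : QLF.Subform 2 σ (QLF.pfister 2 πc))
    (hspn : QLF.Similar 2 φ (Sum.elim (QLF.pfister 2 πc) fun j => b * σ j))
    (c : F) (hc : c ≠ 0)
    (hcπ : QLF.Subform 2 (fun e => c * QLF.pfister 2 πc e) ψ) :
    ∃ (s' : ℕ) (ρ : Fin s' → F),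
      QLF.Subform 2 ρ (QLF.pfister 2 πc) ∧
      QLF.Similar 2 ψ (Sum.elim (QLF.pfister 2 πc) fun j => b * ρ j) ∧
      QLF.WeakVishikEquiv 2 ρ σ := by
  obtain ⟨a, ha, hφ⟩ := hspn
  have hπ : QLF.Anisotropic 2 (QLF.pfister 2 πc) := (hψan.of_subform hcπ).of_mul_left
  obtain ⟨hnm, hrank⟩ := QLF.weakVishikEquiv_iff.mp h
  have hm : Fintype.card (Fin m) = Fintype.card (Fin r → Fin 2) + s := by
    rw [← hnm, hφ.card_eq, Fintype.card_sum, Fintype.card_fin]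
  have hbψ : QLF.sqRank b ψ ≤ QLF.sqRank b (QLF.pfister 2 πc) := by
    rw [← hrank b, hφ.sqRank_eq, QLF.sqRank_mul_left ha, QLF.sqRank, QLF.sqSpan_sumElim,
      QLF.sqSpan_mul_left, sup_eq_left.mpr ((QLF.map_mulLeft_self_le _).trans (hσπ.sqSpan_le b))]
    rfl
  obtain ⟨ρ, hρπ, hψ⟩ := QLF.exists_subform_isometric_sumElim hψan hπ hc hcπ
    (QLF.sqSpan_le_of_sqRank_le hc hcπ hbψ) hm
  refine ⟨s, ρ, hρπ, ⟨c, hc, hψ⟩, QLF.weakVishikEquiv_iff.mpr ⟨rfl, fun t ↦ ?_⟩⟩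
  rcases Nat.eq_zero_or_pos s with rfl | hs
  · rw [Subsingleton.elim ρ σ]
  have : Nonempty (Fin s) := ⟨⟨0, hs⟩⟩
  have hb := QLF.notMem_sqSpan_of_anisotropic hσπ (hφan.of_subform hφ.symm.subform).of_mul_left
  refine QLF.sqRank_eq_of_sqRank_sumElim_eq hb hπ hρπ hσπ ?_
  have := hrank t
  rwa [hφ.sqRank_eq, hψ.sqRank_eq, QLF.sqRank_mul_left ha, QLF.sqRank_mul_left hc, eq_comm] at this

/-- Characteristic 2. Let `φ ∼ᵥ₀ ψ` be anisotropic totally singular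
quadratic forms, `φ` a special quasi-Pfister neighbor given by a triple `(π, b, σ)`,
and `cπ ⊆ ψ` for some `c ∈ F×`. Then `ψ` is a special quasi-Pfister neighbor given by
a triple `(π, b, ρ)` with `ρ ⊆ π` and `ρ ∼ᵥ₀ σ`. -/
theorem stmt_8 {F : Type u} [Field F] [CharP F 2]
    {n m r s : ℕ} (φ : Fin n → F) (ψ : Fin m → F)
    (hφan : QLF.Anisotropic 2 φ) (hψan : QLF.Anisotropic 2 ψ)
    (h : QLF.WeakVishikEquiv 2 φ ψ)
    (πc : Fin r → F) (hπc : ∀ i, πc i ≠ 0) (b : F) (hb : b ≠ 0)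
    (σ : Fin s → F) (hσπ : QLF.Subform 2 σ (QLF.pfister 2 πc))
    (hspn : QLF.Similar 2 φ (Sum.elim (QLF.pfister 2 πc) fun j => b * σ j))
    (c : F) (hc : c ≠ 0)
    (hcπ : QLF.Subform 2 (fun e => c * QLF.pfister 2 πc e) ψ) :
    ∃ (s' : ℕ) (ρ : Fin s' → F),
      QLF.Subform 2 ρ (QLF.pfister 2 πc) ∧
      QLF.Similar 2 ψ (Sum.elim (QLF.pfister 2 πc) fun j => b * ρ j) ∧
      QLF.WeakVishikEquiv 2 ρ σ :=
  stmt_8_general φ ψ hφan hψan h πc b σ hσπ hspn c hc hcπ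
end

section
/- Let F be a field of characteristic 2, let π be a quasi-Pfister form over F, b ∈ F×, and let σ, ρ ⊆ π be totally singular quadratic forms over F with 1 ∈ D_F(σ) ∩ D_F(ρ), such that φ = π ⊥ bσ and ψ = π ⊥ bρ are anisotropic over F. If φ and ψ are Vishik equivalent, then N_F(σ) = N_F(ρ). -/
/-!
Diagonal quasilinear `p`-forms over a field `F` of characteristic `p`,
following Hoffmann and Zemková. A form of dimension `n` is recorded by its
coefficient tuple `a : ι → F` (for a finite index type `ι`), the form being
`x ↦ ∑ i, a i * (x i)^p`.
-/

universe u

/-!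
Take `K = N_F(σ)`, which contains `F^p`, and regard it as an extension of `F` through the
Frobenius `x ↦ x^p`. Over it a form becomes `x ↦ (∑ xᵢ aᵢ)^p`, so its defect is
`dim φ - dim_K span_K(a)`, and Vishik equivalence makes the `K`-spans of the coefficients of
`π ⊥ bσ` and `π ⊥ bρ` equally large. The value set `D_F(π)` of the quasi-Pfister form is a field
containing `K` and the coefficients of `σ` and `ρ`, while anisotropy of `π ⊥ bσ` keeps `b` out of
it; hence both spans split as `span_K(π) ⊕ b · span_K(τ)` for `τ = σ, ρ`. Since `span_K(σ) = K`
is a line, so is `span_K(ρ) ∋ 1`, which puts the coefficients of `ρ` into `K`, i.e.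
`N_F(ρ) ⊆ N_F(σ)`; the reverse inclusion is symmetric.
-/

namespace QLF

open Module Submodule Set

section Forms

variable {p : ℕ} {F : Type*} [Field F] {ι κ : Type*} [Fintype ι] [Fintype κ]

theorem eval_const_mul (c : F) (a x : ι → F) :
    eval p (fun i => c * a i) x = c * eval p a x := by
  simp only [eval, Finset.mul_sum, mul_assoc]

theorem eval_sum_elim (a : ι → F) (a' : κ → F) (x : ι → F) (y : κ → F) :
    eval p (Sum.elim a a') (Sum.elim x y) = eval p a x + eval p a' y :=
  Fintype.sum_sum_type _

theorem Subform.values_subset {a : ι → F} {a' : κ → F} (h : Subform p a a') :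
    values p a ⊆ values p a' := by
  obtain ⟨T, -, hT⟩ := h
  rintro _ ⟨x, rfl⟩
  exact ⟨T x, (hT x).symm⟩

theorem values_subset_of_forall_mem {K : Subfield F} (hK : ∀ x : F, x ^ p ∈ K) {a : ι → F}
    (ha : ∀ i, a i ∈ K) : values p a ⊆ K := by
  rintro _ ⟨x, rfl⟩
  exact K.sum_mem fun i _ => K.mul_mem (ha i) (hK _)

variable [Fact p.Prime]

theorem eval_zero (a : ι → F) : eval p a 0 = 0 := by
  simp [eval, zero_pow (Fact.out : p.Prime).ne_zero]

theorem coeff_mem_values (a : ι → F) (i : ι) : a i ∈ values p a := by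
  classical
  refine ⟨Pi.single i 1, ?_⟩
  have hp := (Fact.out : p.Prime).ne_zero
  rw [eval, Finset.sum_eq_single i (fun j _ hj => by simp [Pi.single_eq_of_ne hj, hp]) (by simp)]
  simp

variable [CharP F p]

theorem eval_neg (a x : ι → F) : eval p a (-x) = -eval p a x := by
  simp only [eval, Pi.neg_apply, neg_pow, neg_one_pow_char F p, neg_one_mul, mul_neg,
    Finset.sum_neg_distrib]

theorem isotropic_sum_elim_of_eval_eq {a : ι → F} {a' : κ → F} {x : ι → F} {y : κ → F}
    (hy : y ≠ 0) (h : eval p a x = eval p a' y) : Isotropic p (Sum.elim a a') :=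
  ⟨Sum.elim x (-y), fun h0 => hy (neg_eq_zero.mp (funext fun j => congrFun h0 (Sum.inr j))),
    by rw [eval_sum_elim, eval_neg, h, add_neg_cancel]⟩

theorem mem_pthSubfield {x : F} : x ∈ pthSubfield p F ↔ ∃ y, y ^ p = x := by
  have : pthSubfield p F = (frobenius F p).fieldRange :=
    le_antisymm (Subfield.closure_le.mpr fun _ ⟨y, hy⟩ => ⟨y, hy⟩)
      (fun _ ⟨y, hy⟩ => Subfield.subset_closure ⟨y, hy⟩)
  rw [this]
  rfl

theorem values_eq_span (a : ι → F) :
    values p a = (span (pthSubfield p F) (range a) : Set F) := by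
  ext z
  rw [SetLike.mem_coe, mem_span_range_iff_exists_fun]
  constructor
  · rintro ⟨x, rfl⟩
    exact ⟨fun i => ⟨x i ^ p, mem_pthSubfield.mpr ⟨x i, rfl⟩⟩,
      Finset.sum_congr rfl fun i _ => mul_comm _ _⟩
  · rintro ⟨c, rfl⟩
    choose y hy using fun i => mem_pthSubfield.mp (c i).2
    exact ⟨y, Finset.sum_congr rfl fun i _ => by rw [hy, mul_comm]; rfl⟩

end Forms

section Pfister

variable {p : ℕ} {F : Type*} [Field F]

theorem pow_val_mul_pow_val {M : Type*} [Monoid M] (u : M) (i j : Fin p) :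
    u ^ (i : ℕ) * u ^ (j : ℕ) = (u ^ (((i : ℕ) + j) / p)) ^ p * u ^ ((i + j : Fin p) : ℕ) := by
  rw [Fin.val_add, ← pow_mul, ← pow_add, ← pow_add, Nat.div_add_mod']

theorem pfister_mul {n : ℕ} (c : Fin n → F) (e e' : Fin n → Fin p) :
    pfister p c e * pfister p c e' =
      (∏ i, c i ^ (((e i : ℕ) + e' i) / p)) ^ p * pfister p c (e + e') := by
  simp only [pfister, ← Finset.prod_mul_distrib, ← Finset.prod_pow, pow_val_mul_pow_val,
    Pi.add_apply]

variable [Fact p.Prime]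

theorem one_mem_span_pfister {n : ℕ} (c : Fin n → F) :
    (1 : F) ∈ span (pthSubfield p F) (range (pfister p c)) :=
  subset_span ⟨0, by simp [pfister]⟩

variable [CharP F p]

theorem mul_mem_span_pfister {n : ℕ} (c : Fin n → F) {x y : F}
    (hx : x ∈ span (pthSubfield p F) (range (pfister p c)))
    (hy : y ∈ span (pthSubfield p F) (range (pfister p c))) :
    x * y ∈ span (pthSubfield p F) (range (pfister p c)) := by
  have hxy := Submodule.mul_mem_mul hx hy
  rw [span_mul_span] at hxy
  refine span_le.mpr ?_ hxy
  rintro _ ⟨_, ⟨e, rfl⟩, _, ⟨e', rfl⟩, rfl⟩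
  change pfister p c e * pfister p c e' ∈ _
  rw [pfister_mul]
  exact smul_mem _ (⟨_, mem_pthSubfield.mpr ⟨_, rfl⟩⟩ : pthSubfield p F) (subset_span ⟨e + e', rfl⟩)

variable (p) in
/-- The value set `D_F(⟪c⟫)`, a field because a product of two coefficients of `⟪c⟫` is a
`p`-th power times a third one. -/
def pfisterField {n : ℕ} (c : Fin n → F) : Subfield F :=
  let S := (span (pthSubfield p F) (range (pfister p c))).toSubalgebra
    (one_mem_span_pfister c) fun _ _ => mul_mem_span_pfister c
  (S.toIntermediateField fun x hx => by
    rcases eq_or_ne x 0 with rfl | hx0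
    · simp
    have hxinv : x⁻¹ = x⁻¹ ^ p * x ^ (p - 1) := by
      rw [inv_pow, ← pow_sub_one_mul (Fact.out : p.Prime).ne_zero x]
      field_simp
    rw [hxinv]
    exact S.mul_mem (S.algebraMap_mem ⟨_, mem_pthSubfield.mpr ⟨_, rfl⟩⟩)
      (S.pow_mem hx _)).toSubfield

theorem coe_pfisterField {n : ℕ} (c : Fin n → F) :
    (pfisterField p c : Set F) = values p (pfister p c) :=
  (values_eq_span _).symm

theorem pow_mem_pfisterField {n : ℕ} (c : Fin n → F) (x : F) : x ^ p ∈ pfisterField p c := by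
  have := smul_mem _ (⟨x ^ p, mem_pthSubfield.mpr ⟨x, rfl⟩⟩ : pthSubfield p F)
    (one_mem_span_pfister c)
  rwa [Subfield.smul_def, smul_eq_mul, mul_one] at this

end Pfister

section NormField

variable {p : ℕ} {F : Type*} [Field F] {ι : Type*} [Fintype ι]

theorem pow_mem_normField (a : ι → F) (x : F) : x ^ p ∈ normField p a :=
  Subfield.subset_closure (Or.inl ⟨x, rfl⟩)

theorem values_subset_normField {a : ι → F} (h1 : (1 : F) ∈ values p a) :
    values p a ⊆ normField p a := by
  intro u hu
  rcases eq_or_ne u 0 with rfl | hu0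
  · exact zero_mem _
  · exact Subfield.subset_closure (Or.inr ⟨u, hu, 1, h1, hu0, one_ne_zero, (div_one u).symm⟩)

theorem normField_le {K : Subfield F} (hK : ∀ x : F, x ^ p ∈ K) {a : ι → F}
    (ha : values p a ⊆ K) : normField p a ≤ K :=
  Subfield.closure_le.mpr <| by
    rintro _ (⟨x, rfl⟩ | ⟨u, hu, v, hv, -, -, rfl⟩)
    exacts [hK x, K.div_mem (ha hu) (ha hv)]

theorem normField_le_pfisterField [Fact p.Prime] [CharP F p] {n : ℕ} {c : Fin n → F}
    {σ : ι → F} (hσ : Subform p σ (pfister p c)) : normField p σ ≤ pfisterField p c :=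
  normField_le (pow_mem_pfisterField c) (coe_pfisterField c ▸ hσ.values_subset)

end NormField

section SpanOverSubfield

variable {F : Type*} [Field F] {K : Subfield F}

theorem span_subset_subfield {L : Subfield F} (hKL : K ≤ L) {s : Set F} (hs : s ⊆ L) :
    (span K s : Set F) ⊆ L := fun _ hx =>
  span_induction (fun _ hy => hs hy) L.zero_mem (fun _ _ _ _ => L.add_mem)
    (fun k _ _ hy => L.mul_mem (hKL k.2) hy) hx

theorem span_range_const_mul {ι : Type*} (b : F) (a : ι → F) :
    span K (range fun i => b * a i) = (span K (range a)).map (LinearMap.mulLeft K b) := by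
  rw [map_span, ← range_comp]
  rfl

theorem finrank_sup_map_mulLeft_s9 {L : Subfield F} {V W : Submodule K F}
    [FiniteDimensional K V] [FiniteDimensional K W]
    (hV : (V : Set F) ⊆ L) (hW : (W : Set F) ⊆ L) {b : F} (hb : b ∉ L) :
    finrank K ↥(V ⊔ W.map (LinearMap.mulLeft K b)) = finrank K V + finrank K W := by
  have hb0 : b ≠ 0 := fun h => hb (h ▸ L.zero_mem)
  have hdisj : V ⊓ W.map (LinearMap.mulLeft K b) = ⊥ := by
    rw [Submodule.eq_bot_iff]
    rintro _ ⟨hx, w, hw, rfl⟩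
    by_contra hne
    have hw0 : w ≠ 0 := by rintro rfl; simp at hne
    -- `b = (b * w) * w⁻¹` would lie in `L`
    exact hb (by simpa [hw0] using L.mul_mem (hV hx) (L.inv_mem (hW hw)))
  have hsum := Submodule.finrank_sup_add_finrank_inf_eq V (W.map (LinearMap.mulLeft K b))
  rwa [hdisj, finrank_bot, add_zero, ← LinearEquiv.finrank_eq
    (W.equivMapOfInjective _ (mul_right_injective₀ hb0))] at hsum

theorem finrank_span_eq_one_iff {p : ℕ} {ι : Type*} [Fintype ι]
    (hK : ∀ x : F, x ^ p ∈ K) {a : ι → F} (h1 : (1 : F) ∈ values p a) :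
    finrank K (span K (range a)) = 1 ↔ ∀ i, a i ∈ K := by
  have h1mem : (1 : F) ∈ span K (range a) := by
    obtain ⟨x, hx⟩ := h1
    rw [← hx]
    refine sum_mem fun i _ => ?_
    rw [mul_comm]
    exact smul_mem _ (⟨x i ^ p, hK _⟩ : K) (subset_span ⟨i, rfl⟩)
  rw [finrank_eq_one_iff_of_nonzero' (⟨1, h1mem⟩ : span K (range a)) (by simp)]
  constructor
  · intro h i
    obtain ⟨k, hk⟩ := h ⟨a i, subset_span ⟨i, rfl⟩⟩
    have hki : (k : F) * 1 = a i := congrArg Subtype.val hk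
    rw [← hki, mul_one]
    exact k.2
  · rintro h ⟨w, hw⟩
    have hw1 : w ∈ span K {1} :=
      span_le.mpr (range_subset_iff.mpr fun i => mem_span_singleton.mpr ⟨⟨a i, h i⟩, mul_one _⟩) hw
    obtain ⟨k, hk⟩ := mem_span_singleton.mp hw1
    exact ⟨k, Subtype.ext hk⟩

end SpanOverSubfield

section Neighbors

variable {p : ℕ} [Fact p.Prime] {F : Type*} [Field F] [CharP F p] {ι : Type*} [Fintype ι]
  {n : ℕ} {c : Fin n → F} {b : F}

theorem notMem_pfisterField_of_anisotropic {σ : ι → F} (h1 : (1 : F) ∈ values p σ)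
    (han : Anisotropic p (Sum.elim (pfister p c) fun j => b * σ j)) : b ∉ pfisterField p c := by
  intro hb
  rw [← SetLike.mem_coe, coe_pfisterField] at hb
  obtain ⟨x, hx⟩ := hb
  obtain ⟨y, hy⟩ := h1
  have hy0 : y ≠ 0 := by
    rintro rfl
    rw [eval_zero] at hy
    exact zero_ne_one hy
  exact han (isotropic_sum_elim_of_eval_eq hy0 (by rw [hx, eval_const_mul, hy, mul_one]))

theorem finrank_span_sum_elim_pfister {K : Subfield F} (hK : K ≤ pfisterField p c)
    (hb : b ∉ pfisterField p c) {τ : ι → F} (hτ : Subform p τ (pfister p c)) :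
    finrank K (span K (range (Sum.elim (pfister p c) fun j => b * τ j))) =
      finrank K (span K (range (pfister p c))) + finrank K (span K (range τ)) := by
  have := FiniteDimensional.span_of_finite K (finite_range (pfister p c))
  have := FiniteDimensional.span_of_finite K (finite_range τ)
  rw [Set.Sum.elim_range, span_union, span_range_const_mul]
  refine finrank_sup_map_mulLeft_s9 (span_subset_subfield hK ?_) (span_subset_subfield hK ?_) hb
  · rw [coe_pfisterField]
    exact range_subset_iff.mpr (coeff_mem_values _)
  · exact (range_subset_iff.mpr (coeff_mem_values τ)).trans
      (coe_pfisterField c ▸ hτ.values_subset)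

end Neighbors

section Vishik

variable {p : ℕ} [Fact p.Prime] {ι κ : Type*} [Fintype ι] [Fintype κ]

theorem defect_frobenius_add_finrank_span {F : Type*} [Field F] [CharP F p] (K : Subfield F)
    (hK : ∀ x : F, x ^ p ∈ K) (a : ι → F) :
    defect p ((frobenius F p).codRestrict K hK ∘ a) + finrank K (span K (range a)) =
      Fintype.card ι := by
  have hker : zeroSubmodule p ((frobenius F p).codRestrict K hK ∘ a) =
      LinearMap.ker (Fintype.linearCombination K a) := by
    ext x
    have hpow : ((eval p ((frobenius F p).codRestrict K hK ∘ a) x : K) : F) =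
        Fintype.linearCombination K a x ^ p := by
      simp only [eval, Fintype.linearCombination_apply, sum_pow_char, Subfield.smul_def,
        smul_eq_mul, Function.comp_apply]
      push_cast
      refine Finset.sum_congr rfl fun i _ => ?_
      change a i ^ p * _ = _
      rw [mul_pow, mul_comm]
    change eval p _ x = 0 ↔ _
    rw [LinearMap.mem_ker, ← ZeroMemClass.coe_eq_zero, hpow,
      pow_eq_zero_iff (Fact.out : p.Prime).ne_zero]
  rw [defect, hker, ← Fintype.range_linearCombination, add_comm,
    LinearMap.finrank_range_add_finrank_ker, finrank_fintype_fun_eq_card]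

variable {F : Type u} [Field F] [CharP F p]

theorem VishikEquiv.symm {a : ι → F} {b : κ → F} (h : VishikEquiv p a b) : VishikEquiv p b a :=
  ⟨h.1.symm, fun E _ _ f => (h.2 E f).symm⟩

theorem VishikEquiv.finrank_span_eq {a : ι → F} {b : κ → F} (h : VishikEquiv p a b)
    (K : Subfield F) (hK : ∀ x : F, x ^ p ∈ K) :
    finrank K (span K (range a)) = finrank K (span K (range b)) := by
  have ha := defect_frobenius_add_finrank_span K hK a
  have hb := defect_frobenius_add_finrank_span K hK b
  have hdef := h.2 K ((frobenius F p).codRestrict K hK)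
  have hcard := h.1
  omega

theorem normField_le_of_vishikEquiv {n : ℕ} {c : Fin n → F} {b : F} {σ : ι → F} {ρ : κ → F}
    (hσ : Subform p σ (pfister p c)) (hρ : Subform p ρ (pfister p c))
    (h1σ : (1 : F) ∈ values p σ) (h1ρ : (1 : F) ∈ values p ρ)
    (han : Anisotropic p (Sum.elim (pfister p c) fun j => b * σ j))
    (h : VishikEquiv p (Sum.elim (pfister p c) fun j => b * σ j)
      (Sum.elim (pfister p c) fun j => b * ρ j)) :
    normField p ρ ≤ normField p σ := by
  set K := normField p σ
  have hK : ∀ x : F, x ^ p ∈ K := pow_mem_normField σ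
  have hKP : K ≤ pfisterField p c := normField_le_pfisterField hσ
  have hb := notMem_pfisterField_of_anisotropic h1σ han
  have hσK : finrank K (span K (range σ)) = 1 :=
    (finrank_span_eq_one_iff hK h1σ).mpr fun i => values_subset_normField h1σ (coeff_mem_values σ i)
  have hρK : finrank K (span K (range ρ)) = 1 := by
    have hdim := h.finrank_span_eq K hK
    rw [finrank_span_sum_elim_pfister hKP hb hσ, finrank_span_sum_elim_pfister hKP hb hρ] at hdim
    omega
  exact normField_le hK (values_subset_of_forall_mem hK ((finrank_span_eq_one_iff hK h1ρ).mp hρK))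

end Vishik

end QLF

theorem stmt_9_general {F : Type u} [Field F] [CharP F 2]
    {r s t : ℕ} (πc : Fin r → F) (b : F)
    (σ : Fin s → F) (ρ : Fin t → F)
    (hσπ : QLF.Subform 2 σ (QLF.pfister 2 πc))
    (hρπ : QLF.Subform 2 ρ (QLF.pfister 2 πc))
    (h1σ : (1 : F) ∈ QLF.values 2 σ) (h1ρ : (1 : F) ∈ QLF.values 2 ρ)
    (hφan : QLF.Anisotropic 2 (Sum.elim (QLF.pfister 2 πc) fun j => b * σ j))
    (hψan : QLF.Anisotropic 2 (Sum.elim (QLF.pfister 2 πc) fun j => b * ρ j))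
    (h : QLF.VishikEquiv 2 (Sum.elim (QLF.pfister 2 πc) fun j => b * σ j)
          (Sum.elim (QLF.pfister 2 πc) fun j => b * ρ j)) :
    QLF.normField 2 σ = QLF.normField 2 ρ :=
  le_antisymm (QLF.normField_le_of_vishikEquiv hρπ hσπ h1ρ h1σ hψan h.symm)
    (QLF.normField_le_of_vishikEquiv hσπ hρπ h1σ h1ρ hφan h)

/-- Characteristic 2. Let `π` be a quasi-Pfister form, `b ∈ F×`,
`σ, ρ ⊆ π` with `1 ∈ D_F(σ) ∩ D_F(ρ)`, and suppose `φ = π ⊥ bσ` and `ψ = π ⊥ bρ` are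
anisotropic. If `φ ∼ᵥ ψ`, then `N_F(σ) = N_F(ρ)`. -/
theorem stmt_9 {F : Type u} [Field F] [CharP F 2]
    {r s t : ℕ} (πc : Fin r → F) (hπc : ∀ i, πc i ≠ 0) (b : F) (hb : b ≠ 0)
    (σ : Fin s → F) (ρ : Fin t → F)
    (hσπ : QLF.Subform 2 σ (QLF.pfister 2 πc))
    (hρπ : QLF.Subform 2 ρ (QLF.pfister 2 πc))
    (h1σ : (1 : F) ∈ QLF.values 2 σ) (h1ρ : (1 : F) ∈ QLF.values 2 ρ)
    (hφan : QLF.Anisotropic 2 (Sum.elim (QLF.pfister 2 πc) fun j => b * σ j))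
    (hψan : QLF.Anisotropic 2 (Sum.elim (QLF.pfister 2 πc) fun j => b * ρ j))
    (h : QLF.VishikEquiv 2 (Sum.elim (QLF.pfister 2 πc) fun j => b * σ j)
          (Sum.elim (QLF.pfister 2 πc) fun j => b * ρ j)) :
    QLF.normField 2 σ = QLF.normField 2 ρ :=
  stmt_9_general πc b σ ρ hσπ hρπ h1σ h1ρ hφan hψan h
end
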